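/- Let (V1, V2) be commuting isometries on H such that the wandering subspace W1 = ker V1* is finite dimensional. If the defect operator C(V1,V2) ≤ 0, then C(V1,V2) = 0. (Key step: W1 ⊆ V2W1 together with dim W1 < ∞ and V2 isometric forces W1 = V2W1.) -/

import Mathlib

open ContinuousLinearMap Filter Topology Metric
open scoped InnerProductSpace

open Classical in
/-- Orthogonal projection onto a subspace, as an operator on the ambient space. -/
noncomputable def projCLM {H : Type*} [NormedAddCommGroup H] [InnerProductSpace ℂ H]
    (K : Submodule ℂ H) : H →L[ℂ] H :=
  if h : K.HasOrthogonalProjection then K.subtypeL.comp (@Submodule.orthogonalProjectionOnto ℂ H _ _ _ K h)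
  else 0

/-!
For an isometry `V`, `1 - V V*` is the orthogonal projection onto `ker V*`, and `V P_K V*` is the
orthogonal projection onto `V K`. Since `V₁` and `V₂` commute, `C = P_{W₁} - V₂ P_{W₁} V₂*`
`= P_{W₁} - P_{V₂ W₁}`, so `-C ≥ 0` says `W₁ ⊆ V₂ W₁`. The injective map `V₂` gives `V₂ W₁` the
same finite dimension as `W₁`, hence `W₁ = V₂ W₁` and `C = 0`.
-/

theorem IsStarProjection.conj_of_star_mul_self {R : Type*} [Monoid R] [StarMul R] {p v : R}
    (hp : IsStarProjection p) (hv : star v * v = 1) : IsStarProjection (v * p * star v) where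
  isIdempotentElem := by
    calc v * p * star v * (v * p * star v) = v * (p * (star v * v) * p) * star v := by
          simp only [mul_assoc]
      _ = v * p * star v := by rw [hv, mul_one, hp.isIdempotentElem.eq, mul_assoc]
  isSelfAdjoint := by
    rw [IsSelfAdjoint, star_mul, star_mul, star_star, hp.isSelfAdjoint.star_eq, mul_assoc]

theorem Submodule.eq_map_of_le_map {K V : Type*} [DivisionRing K] [AddCommGroup V] [Module K V]
    {f : V →ₗ[K] V} (hf : Function.Injective f) {W : Submodule K V} [FiniteDimensional K W]
    (h : W ≤ W.map f) : W = W.map f :=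
  eq_of_le_of_finrank_eq h (W.equivMapOfInjective f hf).finrank_eq

namespace ContinuousLinearMap

variable {𝕜 E : Type*} [RCLike 𝕜] [NormedAddCommGroup E] [InnerProductSpace 𝕜 E] [CompleteSpace E]

theorem _root_.IsStarProjection.eq_starProjection_of_range_eq {p : E →L[𝕜] E}
    (hp : IsStarProjection p) {K : Submodule 𝕜 E} [K.HasOrthogonalProjection]
    (h : LinearMap.range (p : E →ₗ[𝕜] E) = K) :
    p = K.starProjection :=
  hp.ext isStarProjection_starProjection (by rw [h, K.range_starProjection])

variable {V : E →L[𝕜] E}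

theorem _root_.IsStarProjection.conj_adjoint {p : E →L[𝕜] E} (hp : IsStarProjection p)
    (hV : adjoint V ∘L V = 1) : IsStarProjection (V ∘L p ∘L adjoint V) := by
  have hV' : star V * V = 1 := by rwa [star_eq_adjoint, mul_def]
  simpa only [star_eq_adjoint, mul_def, comp_assoc] using hp.conj_of_star_mul_self hV'

theorem starProjection_ker_adjoint (hV : adjoint V ∘L V = 1) :
    (LinearMap.ker (adjoint V : E →ₗ[𝕜] E)).starProjection = 1 - V ∘L adjoint V := by
  have hP : IsStarProjection (V ∘L adjoint V) := by
    simpa only [one_def, id_comp] using (IsStarProjection.one _).conj_adjoint hV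
  refine (hP.one_sub.eq_starProjection_of_range_eq ?_).symm
  rw [LinearMap.IsIdempotentElem.range_eq_ker_one_sub
      (isIdempotentElem_toLinearMap_iff.mpr hP.one_sub.isIdempotentElem),
    toLinearMap_sub, toLinearMap_one, sub_sub_cancel, ker_self_comp_adjoint]

theorem conj_starProjection_eq_starProjection_map (hV : adjoint V ∘L V = 1)
    (K : Submodule 𝕜 E) [K.HasOrthogonalProjection]
    [(K.map (V : E →ₗ[𝕜] E)).HasOrthogonalProjection] :
    V ∘L K.starProjection ∘L adjoint V = (K.map (V : E →ₗ[𝕜] E)).starProjection := by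
  refine (isStarProjection_starProjection.conj_adjoint hV).eq_starProjection_of_range_eq ?_
  have hsurj : Function.Surjective (adjoint V) := fun x ↦ ⟨V x, by simpa using congr($hV x)⟩
  rw [toLinearMap_comp, toLinearMap_comp, LinearMap.range_comp,
    LinearMap.range_comp_of_range_eq_top _ (LinearMap.range_eq_top_of_surjective _ hsurj),
    K.range_starProjection]

end ContinuousLinearMap

theorem stmt_18 {H : Type*} [NormedAddCommGroup H] [InnerProductSpace ℂ H] [CompleteSpace H]
    (V1 V2 : H →L[ℂ] H) (hV1 : ∀ x, ‖V1 x‖ = ‖x‖) (hV2 : ∀ x, ‖V2 x‖ = ‖x‖)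
    (hcomm : V1 ∘L V2 = V2 ∘L V1)
    (W1 : Submodule ℂ H) (hW1 : W1 = LinearMap.ker (adjoint V1 : H →ₗ[ℂ] H))
    (hfin : FiniteDimensional ℂ W1)
    (C : H →L[ℂ] H)
    (hCdef : C = 1 - V1 ∘L adjoint V1 - V2 ∘L adjoint V2
        + V1 ∘L V2 ∘L adjoint V1 ∘L adjoint V2)
    (hneg : (-C).IsPositive) :
    C = 0 := by
  have hV1' := V1.norm_map_iff_adjoint_comp_self.mp hV1
  have hV2' := V2.norm_map_iff_adjoint_comp_self.mp hV2
  have hP : W1.starProjection = 1 - V1 ∘L adjoint V1 := by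
    subst hW1
    exact starProjection_ker_adjoint hV1'
  have hQ := conj_starProjection_eq_starProjection_map hV2' W1
  have hC : C = W1.starProjection - (W1.map (V2 : H →ₗ[ℂ] H)).starProjection := by
    rw [hCdef, ← hQ, hP]
    simp only [← mul_def] at hcomm ⊢
    rw [← mul_assoc V1 V2, hcomm]
    noncomm_ring
  have hle : W1 ≤ W1.map (V2 : H →ₗ[ℂ] H) := by
    rw [← Submodule.starProjection_le_starProjection_iff, ContinuousLinearMap.le_def, ← neg_sub, ← hC]
    exact hneg
  have hV2inj : Function.Injective V2 :=
    Function.LeftInverse.injective (g := adjoint V2) fun x ↦ congr($hV2' x)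
  rw [hC, sub_eq_zero, Submodule.starProjection_inj]
  exact Submodule.eq_map_of_le_map hV2inj hle
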